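/- arXiv:2006.03781 — 8 statements merged into one kernel-verified Lean document; each statement's English description precedes it below -/
import Mathlib

section
/- Let T be a finite nonempty set of vectors in ℝ^d partitioned into disjoint subsets T_C (nonempty) and T_D, with labels y_x ∈ {-1, 1} for each x ∈ T. Let τ > 0, V ≥ 0, 0 ≤ ξ ≤ 1/2, and let q : T → [0,1] satisfy ∑_{x∈T} q(x) ≥ (1−ξ)|T|. Define p(x) = q(x) / ∑_{x'∈T} q(x'). Fix w ∈ ℝ^d and suppose (1/|T|) ∑_{x∈T} q(x)(w·x)² ≤ V, (1/|T_C|) ∑_{x∈T_C} (w·x)² ≤ V, and |T_D| ≤ ξ|T|. Then (1/|T_C|) ∑_{x∈T_C} ℓ_τ(w; x, y_x) ≤ ∑_{x∈T} p(x) ℓ_τ(w; x, y_x) + 2ξ(1 + √(2V)/τ) + 2ξ + √(2ξV)/τ. -/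
open Finset

/-!
Split the clean average of the loss `ℓ` into the parts weighted by `q` and by `1 - q`. Since
`|T_D| ≤ ξ|T|` and `ξ ≤ 1/2`, we have `∑ q ≤ |T| ≤ (1 + 2ξ)|T_C|`, so the `q`-part is at most
`(1 + 2ξ)` times the reweighted loss; and `1 - q` has mass at most `ξ|T| ≤ 2ξ|T_C|` on `T_C`.
On each part the hinge loss is at most `1 + |w·x|/τ`, and Cauchy–Schwarz bounds the weighted
mean of `|w·x|` by the root of the corresponding second-moment bound.
-/

lemma max_zero_one_sub_mul_div_le {y t τ : ℝ} (hy : |y| ≤ 1) (hτ : 0 < τ) :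
    max 0 (1 - y * t / τ) ≤ 1 + |t| / τ := by
  have hyt : |y * t| ≤ |t| := by
    rw [abs_mul]; exact mul_le_of_le_one_left (abs_nonneg t) hy
  have : -|t| / τ ≤ y * t / τ := by
    gcongr; linarith [neg_abs_le (y * t)]
  exact max_le (by positivity) (by linarith [neg_div τ |t|])

section WeightedSums

variable {ι : Type*} (s : Finset ι) {c u ℓ : ι → ℝ}

lemma sum_mul_abs_le_sqrt_sum_mul_sum_mul_sq (hc : ∀ i ∈ s, 0 ≤ c i) :
    ∑ i ∈ s, c i * |u i| ≤ √((∑ i ∈ s, c i) * ∑ i ∈ s, c i * u i ^ 2) :=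
  Real.le_sqrt_of_sq_le <| sum_sq_le_sum_mul_sum_of_sq_le_mul s hc
    (fun i hi => mul_nonneg (hc i hi) (sq_nonneg _))
    (fun i _ => le_of_eq (by rw [mul_pow, sq_abs]; ring))

lemma sum_mul_le_sum_add_sqrt_div {τ : ℝ} (hτ : 0 < τ) (hc : ∀ i ∈ s, 0 ≤ c i)
    (hℓ : ∀ i ∈ s, ℓ i ≤ 1 + |u i| / τ) :
    ∑ i ∈ s, c i * ℓ i ≤ ∑ i ∈ s, c i + √((∑ i ∈ s, c i) * ∑ i ∈ s, c i * u i ^ 2) / τ :=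
  calc ∑ i ∈ s, c i * ℓ i ≤ ∑ i ∈ s, (c i + c i * |u i| / τ) :=
        sum_le_sum fun i hi =>
          (mul_le_mul_of_nonneg_left (hℓ i hi) (hc i hi)).trans_eq (by ring)
    _ = ∑ i ∈ s, c i + (∑ i ∈ s, c i * |u i|) / τ := by rw [sum_add_distrib, sum_div]
    _ ≤ _ := by gcongr; exact sum_mul_abs_le_sqrt_sum_mul_sum_mul_sq s hc

lemma sum_mul_le_mul_add_sqrt_div {τ n a b : ℝ} (hτ : 0 < τ) (hn : 0 ≤ n)
    (hc : ∀ i ∈ s, 0 ≤ c i) (hℓ : ∀ i ∈ s, ℓ i ≤ 1 + |u i| / τ)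
    (hca : ∑ i ∈ s, c i ≤ n * a) (hcb : ∑ i ∈ s, c i * u i ^ 2 ≤ n * b) :
    ∑ i ∈ s, c i * ℓ i ≤ n * (a + √(a * b) / τ) := by
  have hsq : (∑ i ∈ s, c i) * ∑ i ∈ s, c i * u i ^ 2 ≤ n * n * (a * b) := by
    have := mul_le_mul hca hcb (sum_nonneg fun i hi => mul_nonneg (hc i hi) (sq_nonneg _))
      ((sum_nonneg hc).trans hca)
    linarith
  calc ∑ i ∈ s, c i * ℓ i
      ≤ ∑ i ∈ s, c i + √((∑ i ∈ s, c i) * ∑ i ∈ s, c i * u i ^ 2) / τ :=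
        sum_mul_le_sum_add_sqrt_div s hτ hc hℓ
    _ ≤ n * a + √(n * n * (a * b)) / τ := by gcongr
    _ = n * (a + √(a * b) / τ) := by
        rw [Real.sqrt_mul (mul_self_nonneg n), Real.sqrt_mul_self hn]; ring

end WeightedSums

section CleanAndCorrupted

variable {α : Type*} {T C D : Finset α} {hCD : Disjoint C D} {q u ℓ : α → ℝ} {τ V ξ : ℝ}

lemma one_sub_mul_card_le_card (hT : T = C.disjUnion D hCD) (hD : (#D : ℝ) ≤ ξ * #T) :
    (1 - ξ) * #T ≤ #C := by
  have : (#T : ℝ) = #C + #D := by rw [hT, card_disjUnion]; push_cast; ring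
  linarith

lemma sum_one_sub_le_mul_card (hT : T = C.disjUnion D hCD) (hq : ∀ x ∈ D, q x ≤ 1)
    (hqsum : (1 - ξ) * #T ≤ ∑ x ∈ T, q x) :
    ∑ x ∈ C, (1 - q x) ≤ ξ * #T := by
  have hDq : ∑ x ∈ D, q x ≤ #D := by
    simpa using sum_le_card_nsmul D q 1 hq
  have hTq : ∑ x ∈ T, q x = ∑ x ∈ C, q x + ∑ x ∈ D, q x := by rw [hT, sum_disjUnion]
  have : (#T : ℝ) = #C + #D := by rw [hT, card_disjUnion]; push_cast; ring
  rw [sum_sub_distrib, sum_const, nsmul_one]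
  linarith

theorem sum_div_card_le_sum_mul_div_sum_add (hT : T = C.disjUnion D hCD) (hC : C.Nonempty)
    (hτ : 0 < τ) (hV : 0 ≤ V) (hξ0 : 0 ≤ ξ) (hξ : ξ ≤ 1 / 2)
    (hq : ∀ x ∈ T, 0 ≤ q x ∧ q x ≤ 1) (hℓ0 : ∀ x ∈ T, 0 ≤ ℓ x)
    (hℓ : ∀ x ∈ T, ℓ x ≤ 1 + |u x| / τ) (hqsum : (1 - ξ) * #T ≤ ∑ x ∈ T, q x)
    (hvarq : ∑ x ∈ T, q x * u x ^ 2 ≤ #T * V) (hvarC : ∑ x ∈ C, u x ^ 2 ≤ #C * V)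
    (hD : (#D : ℝ) ≤ ξ * #T) :
    (∑ x ∈ C, ℓ x) / #C ≤ (∑ x ∈ T, q x * ℓ x) / ∑ x ∈ T, q x
      + 2 * ξ * (1 + √(2 * V) / τ) + 2 * ξ + √(2 * ξ * V) / τ := by
  have hCT : C ⊆ T := fun x hx => hT ▸ mem_disjUnion.2 (.inl hx)
  have hDT : D ⊆ T := fun x hx => hT ▸ mem_disjUnion.2 (.inr hx)
  have hC0 : (0 : ℝ) < #C := by exact_mod_cast hC.card_pos
  have hCT_card : (#C : ℝ) ≤ #T := by exact_mod_cast card_le_card hCT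
  have hTC := one_sub_mul_card_le_card hT hD
  have hT2C : (#T : ℝ) ≤ 2 * #C := by nlinarith
  set Q := ∑ x ∈ T, q x
  have hQT : Q ≤ #T := by simpa using sum_le_card_nsmul T q 1 fun x hx => (hq x hx).2
  have hT2Q : (#T : ℝ) ≤ 2 * Q := by nlinarith
  have hQ0 : 0 < Q := by linarith
  have hQC : Q ≤ (1 + 2 * ξ) * #C := by nlinarith
  set S := ∑ x ∈ T, q x * ℓ x
  have hS0 : 0 ≤ S := sum_nonneg fun x hx => mul_nonneg (hq x hx).1 (hℓ0 x hx)
  have hS : S ≤ Q * (1 + √(1 * (2 * V)) / τ) :=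
    sum_mul_le_mul_add_sqrt_div T hτ hQ0.le (fun x hx => (hq x hx).1) hℓ (by rw [mul_one])
      (by nlinarith [mul_le_mul_of_nonneg_right hT2Q hV])
  rw [one_mul] at hS
  have hclean : ∑ x ∈ C, q x * ℓ x ≤ S :=
    sum_le_sum_of_subset_of_nonneg hCT fun x hx _ => mul_nonneg (hq x hx).1 (hℓ0 x hx)
  have hdown : ∑ x ∈ C, (1 - q x) * ℓ x ≤ #C * (2 * ξ + √(2 * ξ * V) / τ) := by
    refine sum_mul_le_mul_add_sqrt_div C hτ hC0.le (fun x hx => by linarith [(hq x (hCT hx)).2])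
      (fun x hx => hℓ x (hCT hx)) ?_ ?_
    · linarith [sum_one_sub_le_mul_card hT (fun x hx => (hq x (hDT hx)).2) hqsum,
        mul_le_mul_of_nonneg_left hT2C hξ0]
    · refine le_trans (sum_le_sum fun x hx => ?_) hvarC
      nlinarith [(hq x (hCT hx)).1, sq_nonneg (u x)]
  have hsplit : ∑ x ∈ C, ℓ x = ∑ x ∈ C, q x * ℓ x + ∑ x ∈ C, (1 - q x) * ℓ x := by
    rw [← sum_add_distrib]; exact sum_congr rfl fun x _ => by ring
  have hS_div : S / #C ≤ S / Q + 2 * ξ * (1 + √(2 * V) / τ) := by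
    calc S / #C ≤ (1 + 2 * ξ) * S / Q := by
          rw [div_le_div_iff₀ hC0 hQ0]; nlinarith
      _ = S / Q + 2 * ξ * (S / Q) := by ring
      _ ≤ _ := by gcongr; rwa [div_le_iff₀' hQ0]
  rw [hsplit, add_div]
  have := div_le_div_of_nonneg_right hclean hC0.le
  have := (div_le_iff₀' hC0).2 hdown
  linarith

end CleanAndCorrupted

/-- Loss on clean instances is bounded by the reweighted loss plus error terms. -/
theorem clean_loss_le_reweighted_loss {d : ℕ}
    (T TC TD : Finset (EuclideanSpace ℝ (Fin d)))
    (hTC : TC.Nonempty) (hdisj : Disjoint TC TD) (hunion : ∀ x, x ∈ T ↔ x ∈ TC ∨ x ∈ TD)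
    (y : EuclideanSpace ℝ (Fin d) → ℝ) (hy : ∀ x ∈ T, y x = 1 ∨ y x = -1)
    (τ V ξ : ℝ) (hτ : 0 < τ) (hV : 0 ≤ V) (hξ0 : 0 ≤ ξ) (hξ : ξ ≤ 1 / 2)
    (q : EuclideanSpace ℝ (Fin d) → ℝ)
    (hq01 : ∀ x ∈ T, 0 ≤ q x ∧ q x ≤ 1)
    (hqsum : (1 - ξ) * T.card ≤ ∑ x ∈ T, q x)
    (p : EuclideanSpace ℝ (Fin d) → ℝ)
    (hp : ∀ x, p x = q x / ∑ x' ∈ T, q x')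
    (w : EuclideanSpace ℝ (Fin d))
    (hvarq : (1 / T.card) * ∑ x ∈ T, q x * (inner ℝ w x : ℝ) ^ 2 ≤ V)
    (hvarC : (1 / TC.card) * ∑ x ∈ TC, (inner ℝ w x : ℝ) ^ 2 ≤ V)
    (hTD : (TD.card : ℝ) ≤ ξ * T.card) :
    (1 / TC.card) * ∑ x ∈ TC, max 0 (1 - y x * (inner ℝ w x : ℝ) / τ)
      ≤ (∑ x ∈ T, p x * max 0 (1 - y x * (inner ℝ w x : ℝ) / τ))
        + 2 * ξ * (1 + Real.sqrt (2 * V) / τ) + 2 * ξ + Real.sqrt (2 * ξ * V) / τ := by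
  have hT : T = TC.disjUnion TD hdisj := by ext x; rw [hunion, mem_disjUnion]
  have hT0 : (0 : ℝ) < #T := by
    obtain ⟨x, hx⟩ := hTC
    exact_mod_cast card_pos.2 ⟨x, (hunion x).2 (.inl hx)⟩
  have hC0 : (0 : ℝ) < #TC := by exact_mod_cast hTC.card_pos
  have hp_sum : ∀ ℓ : EuclideanSpace ℝ (Fin d) → ℝ,
      ∑ x ∈ T, p x * ℓ x = (∑ x ∈ T, q x * ℓ x) / ∑ x ∈ T, q x := fun ℓ => by
    rw [sum_div]; exact sum_congr rfl fun x _ => by rw [hp, div_mul_eq_mul_div]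
  rw [one_div_mul_eq_div] at hvarq hvarC ⊢
  rw [hp_sum]
  exact sum_div_card_le_sum_mul_div_sum_add hT hTC hτ hV hξ0 hξ hq01
    (fun x _ => le_max_left _ _)
    (fun x hx => max_zero_one_sub_mul_div_le (by rcases hy x hx with h | h <;> simp [h]) hτ)
    hqsum ((div_le_iff₀' hT0).1 hvarq) ((div_le_iff₀' hC0).1 hvarC) hTD
end

section
/- Let T be a finite nonempty set of vectors in ℝ^d partitioned into disjoint subsets T_C (nonempty) and T_D, with labels y_x ∈ {-1, 1} for each x ∈ T. Let τ > 0, V ≥ 0, 0 ≤ ξ ≤ 1/2, and let q : T → [0,1] satisfy ∑_{x∈T} q(x) ≥ (1−ξ)|T|. Define p(x) = q(x) / ∑_{x'∈T} q(x'). Fix w ∈ ℝ^d and suppose (1/|T|) ∑_{x∈T} q(x)(w·x)² ≤ V and |T_D| ≤ ξ|T|. Then ∑_{x∈T} p(x) ℓ_τ(w; x, y_x) ≤ (1 + 2ξ) · (1/|T_C|) ∑_{x∈T_C} ℓ_τ(w; x, y_x) + 2ξ + 2√(ξV)/τ. -/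
open Finset

/-!
On the clean points the weights `q ≤ 1` can only shrink the hinge loss. On a contaminated point
the hinge loss is at most `1 + |w·x|/τ`, and Cauchy–Schwarz against the weighted second moment
bounds the total weighted contamination by `(ξ + √(ξV)/τ)·|T|`. Normalising by `∑ q ≥ (1-ξ)|T|`
costs a factor `1/(1-ξ) ≤ 1 + 2ξ` on the clean part and a factor `2` on the rest.
-/

lemma hinge_le_one_add_abs_div {y a τ : ℝ} (hy : |y| ≤ 1) (hτ : 0 ≤ τ) :
    max 0 (1 - y * a / τ) ≤ 1 + |a| / τ := by
  have hya : -(y * a) ≤ |a| :=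
    calc -(y * a) ≤ |y| * |a| := (neg_le_abs _).trans (abs_mul y a).le
      _ ≤ |a| := mul_le_of_le_one_left (abs_nonneg a) hy
  refine max_le (by positivity) ?_
  rw [sub_eq_add_neg, ← neg_div]
  gcongr

lemma Finset.sum_mul_abs_le_sqrt_mul {ι : Type*} {s : Finset ι} {q a : ι → ℝ} {M A : ℝ}
    (hq : ∀ i ∈ s, 0 ≤ q i) (hM : ∑ i ∈ s, q i ≤ M) (hA : ∑ i ∈ s, q i * a i ^ 2 ≤ A) :
    ∑ i ∈ s, q i * |a i| ≤ √(M * A) := by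
  have hCS : (∑ i ∈ s, q i * |a i|) ^ 2 ≤ (∑ i ∈ s, q i) * ∑ i ∈ s, q i * a i ^ 2 :=
    sum_sq_le_sum_mul_sum_of_sq_le_mul s hq (fun i hi => mul_nonneg (hq i hi) (sq_nonneg _))
      fun i _ => le_of_eq (by rw [mul_pow, sq_abs]; ring)
  have hprod : (∑ i ∈ s, q i) * ∑ i ∈ s, q i * a i ^ 2 ≤ M * A :=
    mul_le_mul hM hA (sum_nonneg fun i hi => mul_nonneg (hq i hi) (sq_nonneg _))
      ((sum_nonneg hq).trans hM)
  exact (le_abs_self _).trans (Real.abs_le_sqrt (hCS.trans hprod))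

lemma sum_mul_le_sum_clean_add {α : Type*} [DecidableEq α] {T TC TD : Finset α}
    (hdisj : Disjoint TC TD) (hT : T = TC ∪ TD) {q ℓ a : α → ℝ} {τ V ξ : ℝ} (hτ : 0 ≤ τ)
    (hq : ∀ x ∈ T, 0 ≤ q x ∧ q x ≤ 1) (hℓC : ∀ x ∈ TC, 0 ≤ ℓ x)
    (hℓD : ∀ x ∈ TD, ℓ x ≤ 1 + |a x| / τ)
    (hvar : ∑ x ∈ T, q x * a x ^ 2 ≤ V * #T) (hTD : (#TD : ℝ) ≤ ξ * #T) :
    ∑ x ∈ T, q x * ℓ x ≤ ∑ x ∈ TC, ℓ x + (ξ + √(ξ * V) / τ) * #T := by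
  have hqD : ∀ x ∈ TD, 0 ≤ q x ∧ q x ≤ 1 := fun x hx => hq x (by simp [hT, hx])
  have hclean : ∑ x ∈ TC, q x * ℓ x ≤ ∑ x ∈ TC, ℓ x :=
    sum_le_sum fun x hx => mul_le_of_le_one_left (hℓC x hx) (hq x (by simp [hT, hx])).2
  have hmass : ∑ x ∈ TD, q x ≤ ξ * #T :=
    calc ∑ x ∈ TD, q x ≤ ∑ _x ∈ TD, (1 : ℝ) := sum_le_sum fun x hx => (hqD x hx).2
      _ ≤ ξ * #T := by simpa using hTD
  have hmoment : ∑ x ∈ TD, q x * |a x| ≤ √(ξ * V) * #T := by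
    have hvarD : ∑ x ∈ TD, q x * a x ^ 2 ≤ V * #T :=
      (sum_le_sum_of_subset_of_nonneg (by simp [hT])
        fun x hx _ => mul_nonneg (hq x hx).1 (sq_nonneg _)).trans hvar
    calc ∑ x ∈ TD, q x * |a x| ≤ √(ξ * #T * (V * #T)) :=
          sum_mul_abs_le_sqrt_mul (fun x hx => (hqD x hx).1) hmass hvarD
      _ = √(ξ * V) * #T := by
          rw [show ξ * #T * (V * #T) = ξ * V * (#T : ℝ) ^ 2 by ring,
            Real.sqrt_mul' _ (sq_nonneg _), Real.sqrt_sq (Nat.cast_nonneg _)]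
  have hdirty : ∑ x ∈ TD, q x * ℓ x ≤ ∑ x ∈ TD, q x + (∑ x ∈ TD, q x * |a x|) / τ :=
    calc ∑ x ∈ TD, q x * ℓ x ≤ ∑ x ∈ TD, q x * (1 + |a x| / τ) :=
          sum_le_sum fun x hx => mul_le_mul_of_nonneg_left (hℓD x hx) (hqD x hx).1
      _ = ∑ x ∈ TD, q x + (∑ x ∈ TD, q x * |a x|) / τ := by
          rw [sum_div, ← sum_add_distrib]; exact sum_congr rfl fun x _ => by ring
  calc ∑ x ∈ T, q x * ℓ x = ∑ x ∈ TC, q x * ℓ x + ∑ x ∈ TD, q x * ℓ x := by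
        rw [hT, sum_union hdisj]
    _ ≤ ∑ x ∈ TC, ℓ x + (ξ * #T + √(ξ * V) * #T / τ) :=
        add_le_add hclean (hdirty.trans (add_le_add hmass (by gcongr)))
    _ = ∑ x ∈ TC, ℓ x + (ξ + √(ξ * V) / τ) * #T := by ring

lemma div_le_one_add_two_mul_mean_add {A C S n m ξ e : ℝ} (hm : 0 < m) (hmn : m ≤ n)
    (hξ0 : 0 ≤ ξ) (hξ : ξ ≤ 1 / 2) (hC : 0 ≤ C) (he : 0 ≤ e)
    (hS : (1 - ξ) * n ≤ S) (hA : A ≤ C + e * n) :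
    A / S ≤ (1 + 2 * ξ) * (C / m) + 2 * e := by
  have hmS : (1 - ξ) * m ≤ S := (mul_le_mul_of_nonneg_left hmn (by linarith)).trans hS
  have hm' : 0 < (1 - ξ) * m := mul_pos (by linarith) hm
  have hS0 : 0 < S := hm'.trans_le hmS
  have hinv : 1 / (1 - ξ) ≤ 1 + 2 * ξ := by
    rw [div_le_iff₀ (by linarith)]; nlinarith
  have hnS : n / S ≤ 2 := by rw [div_le_iff₀ hS0]; nlinarith
  calc A / S ≤ (C + e * n) / S := by gcongr
    _ = C / S + e * (n / S) := by ring
    _ ≤ C / ((1 - ξ) * m) + e * 2 := by gcongr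
    _ = 1 / (1 - ξ) * (C / m) + 2 * e := by field_simp
    _ ≤ (1 + 2 * ξ) * (C / m) + 2 * e := by gcongr

theorem reweighted_loss_le_clean_loss_general {d : ℕ}
    (T TC TD : Finset (EuclideanSpace ℝ (Fin d)))
    (hTC : TC.Nonempty) (hdisj : Disjoint TC TD) (hunion : ∀ x, x ∈ T ↔ x ∈ TC ∨ x ∈ TD)
    (y : EuclideanSpace ℝ (Fin d) → ℝ) (hy : ∀ x ∈ T, y x = 1 ∨ y x = -1)
    (τ V ξ : ℝ) (hτ : 0 < τ) (hξ0 : 0 ≤ ξ) (hξ : ξ ≤ 1 / 2)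
    (q : EuclideanSpace ℝ (Fin d) → ℝ)
    (hq01 : ∀ x ∈ T, 0 ≤ q x ∧ q x ≤ 1)
    (hqsum : (1 - ξ) * T.card ≤ ∑ x ∈ T, q x)
    (p : EuclideanSpace ℝ (Fin d) → ℝ)
    (hp : ∀ x, p x = q x / ∑ x' ∈ T, q x')
    (w : EuclideanSpace ℝ (Fin d))
    (hvarq : (1 / T.card) * ∑ x ∈ T, q x * (inner ℝ w x : ℝ) ^ 2 ≤ V)
    (hTD : (TD.card : ℝ) ≤ ξ * T.card) :
    (∑ x ∈ T, p x * max 0 (1 - y x * (inner ℝ w x : ℝ) / τ))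
      ≤ (1 + 2 * ξ) * ((1 / TC.card) * ∑ x ∈ TC, max 0 (1 - y x * (inner ℝ w x : ℝ) / τ))
        + 2 * ξ + 2 * Real.sqrt (ξ * V) / τ := by
  classical
  have hT : T = TC ∪ TD := ext fun x => by simpa using hunion x
  have hm : (0 : ℝ) < #TC := by exact_mod_cast hTC.card_pos
  have hmn : (#TC : ℝ) ≤ #T := by exact_mod_cast card_le_card (hT ▸ subset_union_left)
  have hvar : ∑ x ∈ T, q x * (inner ℝ w x : ℝ) ^ 2 ≤ V * #T := by
    rwa [one_div_mul_eq_div, div_le_iff₀ (hm.trans_le hmn)] at hvarq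
  have hloss : ∀ x ∈ TD, max 0 (1 - y x * (inner ℝ w x : ℝ) / τ) ≤ 1 + |(inner ℝ w x : ℝ)| / τ :=
    fun x hx => hinge_le_one_add_abs_div
      (by rcases hy x ((hunion x).2 (.inr hx)) with h | h <;> simp [h]) hτ.le
  have hunnormalized := sum_mul_le_sum_clean_add hdisj hT hτ.le hq01
    (fun x _ => le_max_left _ _) hloss hvar hTD
  calc ∑ x ∈ T, p x * max 0 (1 - y x * (inner ℝ w x : ℝ) / τ)
      = (∑ x ∈ T, q x * max 0 (1 - y x * (inner ℝ w x : ℝ) / τ)) / ∑ x ∈ T, q x := by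
        simp only [hp, div_mul_eq_mul_div, sum_div]
    _ ≤ _ := div_le_one_add_two_mul_mean_add hm hmn hξ0 hξ
        (sum_nonneg fun x _ => le_max_left _ _) (by positivity) hqsum hunnormalized
    _ = _ := by ring

/-- The reweighted loss is bounded by the loss on clean instances plus error terms. -/
theorem reweighted_loss_le_clean_loss {d : ℕ}
    (T TC TD : Finset (EuclideanSpace ℝ (Fin d)))
    (hTC : TC.Nonempty) (hdisj : Disjoint TC TD) (hunion : ∀ x, x ∈ T ↔ x ∈ TC ∨ x ∈ TD)
    (y : EuclideanSpace ℝ (Fin d) → ℝ) (hy : ∀ x ∈ T, y x = 1 ∨ y x = -1)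
    (τ V ξ : ℝ) (hτ : 0 < τ) (hV : 0 ≤ V) (hξ0 : 0 ≤ ξ) (hξ : ξ ≤ 1 / 2)
    (q : EuclideanSpace ℝ (Fin d) → ℝ)
    (hq01 : ∀ x ∈ T, 0 ≤ q x ∧ q x ≤ 1)
    (hqsum : (1 - ξ) * T.card ≤ ∑ x ∈ T, q x)
    (p : EuclideanSpace ℝ (Fin d) → ℝ)
    (hp : ∀ x, p x = q x / ∑ x' ∈ T, q x')
    (w : EuclideanSpace ℝ (Fin d))
    (hvarq : (1 / T.card) * ∑ x ∈ T, q x * (inner ℝ w x : ℝ) ^ 2 ≤ V)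
    (hTD : (TD.card : ℝ) ≤ ξ * T.card) :
    (∑ x ∈ T, p x * max 0 (1 - y x * (inner ℝ w x : ℝ) / τ))
      ≤ (1 + 2 * ξ) * ((1 / TC.card) * ∑ x ∈ TC, max 0 (1 - y x * (inner ℝ w x : ℝ) / τ))
        + 2 * ξ + 2 * Real.sqrt (ξ * V) / τ :=
  reweighted_loss_le_clean_loss_general T TC TD hTC hdisj hunion y hy τ V ξ hτ hξ0 hξ q hq01 hqsum p
    hp w hvarq hTD
end

section
/- Let μ be a probability measure on ℝ^d with ∫ ‖x‖₂² dμ(x) < ∞, let u ∈ ℝ^d, and let b, r > 0 and C ≥ 0. Suppose (i) |u·x| ≤ b for μ-almost every x, and (ii) for every unit vector v ∈ ℝ^d, ∫ ((r v + u)·x)² dμ(x) ≤ C(b² + r²). Then for every symmetric positive semidefinite d×d real matrix H with trace(H) ≤ r², it holds that ∫ xᵀ H x dμ(x) ≤ 2(C + 1)(b² + r²). -/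
/-!
Write the positive semidefinite `H` as a sum of rank-one matrices `v_k v_kᵀ`: then
`xᵀ H x = ∑ₖ ⟪v_k, x⟫²` and `trace H = ∑ₖ ‖v_k‖²`, so it suffices to bound every directional
second moment `∫ ⟪w, x⟫² dμ` by `‖w‖² K / r²` with `K = 2C(b² + r²) + 2b²`. By homogeneity
only unit vectors `v` matter, and there `⟪r v, x⟫ = ⟪r v + u, x⟫ - ⟪u, x⟫` together with
`(a - c)² ≤ 2a² + 2c²` and the band bound `∫ ⟪u, x⟫² dμ ≤ b²` gives `r² ∫ ⟪v, x⟫² dμ ≤ K`.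
-/

open MeasureTheory
open scoped RealInnerProductSpace

section SecondMoment

variable {E : Type*} [NormedAddCommGroup E] [InnerProductSpace ℝ E] [MeasurableSpace E]
  {μ : Measure E}

lemma integrable_inner_sq [OpensMeasurableSpace E] (hint : Integrable (fun x => ‖x‖ ^ 2) μ)
    (a : E) : Integrable (fun x => ⟪a, x⟫ ^ 2) μ := by
  refine (hint.const_mul (‖a‖ ^ 2)).mono'
    ((continuous_const.inner continuous_id).pow 2).aestronglyMeasurable
    (.of_forall fun x => ?_)
  rw [Real.norm_of_nonneg (sq_nonneg _), ← mul_pow]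
  exact sq_le_sq' (neg_le_of_abs_le (abs_real_inner_le_norm a x))
    (le_of_abs_le (abs_real_inner_le_norm a x))

lemma integral_inner_smul_left_sq (c : ℝ) (v : E) :
    ∫ x, ⟪c • v, x⟫ ^ 2 ∂μ = c ^ 2 * ∫ x, ⟪v, x⟫ ^ 2 ∂μ := by
  simp only [real_inner_smul_left, mul_pow, integral_const_mul]

lemma integral_inner_sq_le_mul_norm_sq {M : ℝ}
    (h : ∀ v : E, ‖v‖ = 1 → ∫ x, ⟪v, x⟫ ^ 2 ∂μ ≤ M) (w : E) :
    ∫ x, ⟪w, x⟫ ^ 2 ∂μ ≤ M * ‖w‖ ^ 2 := by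
  rcases eq_or_ne w 0 with rfl | hw
  · simp
  have hw' : ‖w‖ ≠ 0 := norm_ne_zero_iff.mpr hw
  have hunit : ‖‖w‖⁻¹ • w‖ = 1 := by
    rw [norm_smul, norm_inv, norm_norm, inv_mul_cancel₀ hw']
  calc ∫ x, ⟪w, x⟫ ^ 2 ∂μ = ‖w‖ ^ 2 * ∫ x, ⟪‖w‖⁻¹ • w, x⟫ ^ 2 ∂μ := by
        rw [← integral_inner_smul_left_sq, smul_inv_smul₀ hw']
    _ ≤ ‖w‖ ^ 2 * M := by gcongr; exact h _ hunit
    _ = M * ‖w‖ ^ 2 := mul_comm _ _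

lemma integral_inner_sq_le_of_abs_le [IsProbabilityMeasure μ] {u : E} {b : ℝ}
    (h : ∀ᵐ x ∂μ, |⟪u, x⟫| ≤ b) : ∫ x, ⟪u, x⟫ ^ 2 ∂μ ≤ b ^ 2 := by
  calc ∫ x, ⟪u, x⟫ ^ 2 ∂μ ≤ ∫ _, b ^ 2 ∂μ :=
        integral_mono_of_nonneg (.of_forall fun _ => sq_nonneg _) (integrable_const _)
          (h.mono fun x hx => sq_le_sq' (neg_le_of_abs_le hx) (le_of_abs_le hx))
    _ = b ^ 2 := by simp

lemma integral_inner_sq_le_two_mul_add [OpensMeasurableSpace E]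
    (hint : Integrable (fun x => ‖x‖ ^ 2) μ) (a u : E) :
    ∫ x, ⟪a, x⟫ ^ 2 ∂μ ≤ 2 * ∫ x, ⟪a + u, x⟫ ^ 2 ∂μ + 2 * ∫ x, ⟪u, x⟫ ^ 2 ∂μ := by
  have h₁ := (integrable_inner_sq hint (a + u)).const_mul 2
  have h₂ := (integrable_inner_sq hint u).const_mul 2
  rw [← integral_const_mul, ← integral_const_mul, ← integral_add h₁ h₂]
  refine integral_mono (integrable_inner_sq hint a) (h₁.add h₂) fun x => ?_
  have : ⟪a, x⟫ = ⟪a + u, x⟫ - ⟪u, x⟫ := by rw [inner_add_left]; ring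
  rw [this]
  nlinarith [sq_nonneg (⟪a + u, x⟫ + ⟪u, x⟫)]

end SecondMoment

section QuadraticForm

variable {n : Type*} [Fintype n]

lemma quadForm_sum_vecMulVec_self_eq_sum_inner_sq {m : ℕ} (v : Fin m → n → ℝ)
    (x : EuclideanSpace ℝ n) :
    ∑ i, ∑ j, (∑ k, Matrix.vecMulVec (v k) (star (v k))) i j * x i * x j
      = ∑ k, ⟪WithLp.toLp 2 (v k), x⟫ ^ 2 := by
  have hinner : ∀ k, ⟪WithLp.toLp 2 (v k), x⟫ = ∑ i, v k i * x i := fun k => by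
    simp [PiLp.inner_apply, mul_comm]
  simp only [hinner, sq, Matrix.sum_apply, Matrix.vecMulVec_apply, star_trivial,
    Finset.sum_mul, Finset.mul_sum]
  conv_rhs => rw [Finset.sum_comm]
  refine Finset.sum_congr rfl fun i _ => ?_
  rw [Finset.sum_comm]
  exact Finset.sum_congr rfl fun k _ => Finset.sum_congr rfl fun j _ => by ring

lemma trace_sum_vecMulVec_self_eq_sum_norm_sq {m : ℕ} (v : Fin m → n → ℝ) :
    (∑ k, Matrix.vecMulVec (v k) (star (v k))).trace = ∑ k, ‖WithLp.toLp 2 (v k)‖ ^ 2 := by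
  simp only [Matrix.trace_sum, Matrix.trace_vecMulVec, star_trivial]
  refine Finset.sum_congr rfl fun k _ => ?_
  rw [EuclideanSpace.real_norm_sq_eq]
  simp [dotProduct, sq]

lemma integral_quadForm_le_mul_trace {μ : Measure (EuclideanSpace ℝ n)}
    (hint : Integrable (fun x => ‖x‖ ^ 2) μ) {M : ℝ}
    (hM : ∀ w : EuclideanSpace ℝ n, ∫ x, ⟪w, x⟫ ^ 2 ∂μ ≤ M * ‖w‖ ^ 2)
    {H : Matrix n n ℝ} (hH : H.PosSemidef) :
    ∫ x, ∑ i, ∑ j, H i j * x i * x j ∂μ ≤ M * H.trace := by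
  obtain ⟨m, v, rfl⟩ := Matrix.posSemidef_iff_eq_sum_vecMulVec.mp hH
  simp only [quadForm_sum_vecMulVec_self_eq_sum_inner_sq, trace_sum_vecMulVec_self_eq_sum_norm_sq,
    Finset.mul_sum]
  rw [integral_finsetSum _ fun k _ => integrable_inner_sq hint _]
  exact Finset.sum_le_sum fun k _ => hM _

end QuadraticForm

theorem expected_quadratic_form_le_general {d : ℕ}
    (μ : Measure (EuclideanSpace ℝ (Fin d))) [IsProbabilityMeasure μ]
    (hint : Integrable (fun x => ‖x‖ ^ 2) μ)
    (u : EuclideanSpace ℝ (Fin d)) (b r C : ℝ) (hr : 0 < r) (hC : 0 ≤ C)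
    (hband : ∀ᵐ x ∂μ, |(inner ℝ u x : ℝ)| ≤ b)
    (hvar : ∀ v : EuclideanSpace ℝ (Fin d), ‖v‖ = 1 →
      ∫ x, (inner ℝ (r • v + u) x : ℝ) ^ 2 ∂μ ≤ C * (b ^ 2 + r ^ 2))
    (H : Matrix (Fin d) (Fin d) ℝ) (hpsd : H.PosSemidef)
    (htr : H.trace ≤ r ^ 2) :
    ∫ x, ∑ i, ∑ j, H i j * x i * x j ∂μ ≤ 2 * (C + 1) * (b ^ 2 + r ^ 2) := by
  set K := 2 * C * (b ^ 2 + r ^ 2) + 2 * b ^ 2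
  have hunit : ∀ v : EuclideanSpace ℝ (Fin d), ‖v‖ = 1 → ∫ x, ⟪v, x⟫ ^ 2 ∂μ ≤ K / r ^ 2 := by
    intro v hv
    rw [le_div_iff₀ (by positivity), mul_comm, ← integral_inner_smul_left_sq]
    linarith [integral_inner_sq_le_two_mul_add hint (r • v) u, hvar v hv,
      integral_inner_sq_le_of_abs_le hband]
  calc ∫ x, ∑ i, ∑ j, H i j * x i * x j ∂μ
      ≤ K / r ^ 2 * H.trace :=
        integral_quadForm_le_mul_trace hint (integral_inner_sq_le_mul_norm_sq hunit) hpsd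
    _ ≤ K / r ^ 2 * r ^ 2 := by gcongr
    _ = K := div_mul_cancel₀ K (by positivity)
    _ ≤ 2 * (C + 1) * (b ^ 2 + r ^ 2) := by nlinarith

/-- If the band condition holds a.e. and the second moment along all directions
`r•v + u` is bounded, then the expected quadratic form of any PSD matrix of trace at most `r²`
is bounded by `2(C+1)(b² + r²)`. -/
theorem expected_quadratic_form_le {d : ℕ}
    (μ : Measure (EuclideanSpace ℝ (Fin d))) [IsProbabilityMeasure μ]
    (hint : Integrable (fun x => ‖x‖ ^ 2) μ)
    (u : EuclideanSpace ℝ (Fin d)) (b r C : ℝ) (hb : 0 < b) (hr : 0 < r) (hC : 0 ≤ C)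
    (hband : ∀ᵐ x ∂μ, |(inner ℝ u x : ℝ)| ≤ b)
    (hvar : ∀ v : EuclideanSpace ℝ (Fin d), ‖v‖ = 1 →
      ∫ x, (inner ℝ (r • v + u) x : ℝ) ^ 2 ∂μ ≤ C * (b ^ 2 + r ^ 2))
    (H : Matrix (Fin d) (Fin d) ℝ) (hsymm : H.IsSymm) (hpsd : H.PosSemidef)
    (htr : H.trace ≤ r ^ 2) :
    ∫ x, ∑ i, ∑ j, H i j * x i * x j ∂μ ≤ 2 * (C + 1) * (b ^ 2 + r ^ 2) :=
  expected_quadratic_form_le_general μ hint u b r C hr hC hband hvar H hpsd htr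
end

section
/- Let T be a finite nonempty set of vectors in ℝ^d, let u ∈ ℝ^d, and let b, r, ρ > 0 and B ≥ 0 with |u·x| ≤ b for every x ∈ T. Let M = {H ∈ ℝ^{d×d} : H is positive semidefinite, trace(H) ≤ r², and ∑_{i,j} |H_{ij}| ≤ ρ²}. Suppose that for every H ∈ M, (1/|T|) ∑_{x∈T} xᵀ H x ≤ B. Then for every w ∈ ℝ^d with ‖w − u‖₂ ≤ r and ‖w − u‖₁ ≤ ρ, it holds that (1/|T|) ∑_{x∈T} (w·x)² ≤ 2b² + 2B. -/
/-!
Write `w = u + v`. The rank-one matrix `v vᵀ` is positive semidefinite with trace `‖v‖₂²` and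
entrywise ℓ1-norm `‖v‖₁²`, so it lies in the admissible set, and its quadratic form at `x` is
`(v·x)²`; hence the average of `(v·x)²` is at most `B`. Averaging
`(w·x)² ≤ 2 (u·x)² + 2 (v·x)²` and using `|u·x| ≤ b` gives the bound.
-/

open Finset Matrix

namespace Matrix

variable {n R : Type*} [Fintype n]

theorem sum_sum_vecMulVec_self_mul_mul [CommSemiring R] (a x : n → R) :
    ∑ i, ∑ j, vecMulVec a a i j * x i * x j = (a ⬝ᵥ x) ^ 2 := by
  simp only [dotProduct, sq, sum_mul_sum, vecMulVec_apply]
  exact sum_congr rfl fun i _ => sum_congr rfl fun j _ => by ring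

theorem sum_sum_abs_vecMulVec_self [CommRing R] [LinearOrder R] [IsStrictOrderedRing R]
    (a : n → R) : ∑ i, ∑ j, |vecMulVec a a i j| = (∑ i, |a i|) ^ 2 := by
  simp only [sq, sum_mul_sum, vecMulVec_apply, abs_mul]

theorem posSemidef_vecMulVec_self [CommRing R] [PartialOrder R] [StarRing R] [TrivialStar R]
    [StarOrderedRing R] (a : n → R) : (vecMulVec a a).PosSemidef := by
  simpa using posSemidef_vecMulVec_self_star a

end Matrix

namespace EuclideanSpace

variable {n : Type*} [Fintype n]

theorem real_inner_eq_dotProduct (x y : EuclideanSpace ℝ n) :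
    inner ℝ x y = x.ofLp ⬝ᵥ y.ofLp := by
  rw [inner_eq_star_dotProduct, star_trivial, dotProduct_comm]

theorem trace_vecMulVec_self (v : EuclideanSpace ℝ n) :
    (vecMulVec v.ofLp v.ofLp).trace = ‖v‖ ^ 2 := by
  rw [trace_vecMulVec, ← real_inner_eq_dotProduct, real_inner_self_eq_norm_sq]

end EuclideanSpace

namespace Finset

variable {ι K : Type*} [Field K] [LinearOrder K] [IsStrictOrderedRing K]

theorem average_sq_add_le (s : Finset ι) (f g : ι → K) :
    (1 / #s) * ∑ i ∈ s, (f i + g i) ^ 2 ≤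
      2 * ((1 / #s) * ∑ i ∈ s, f i ^ 2) + 2 * ((1 / #s) * ∑ i ∈ s, g i ^ 2) := by
  calc (1 / #s) * ∑ i ∈ s, (f i + g i) ^ 2
      ≤ (1 / #s) * ∑ i ∈ s, 2 * (f i ^ 2 + g i ^ 2) := by
        gcongr with i; exact add_sq_le
    _ = _ := by rw [← mul_sum, sum_add_distrib]; ring

theorem average_sq_le_of_abs_le {s : Finset ι} {f : ι → K} {b : K} (h : ∀ i ∈ s, |f i| ≤ b) :
    (1 / #s) * ∑ i ∈ s, f i ^ 2 ≤ b ^ 2 := by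
  rcases s.eq_empty_or_nonempty with rfl | hs
  · simp [sq_nonneg]
  have hpoint : ∀ i ∈ s, f i ^ 2 ≤ b ^ 2 := fun i hi =>
    sq_abs (f i) ▸ pow_le_pow_left₀ (abs_nonneg _) (h i hi) 2
  calc (1 / #s) * ∑ i ∈ s, f i ^ 2 ≤ (1 / #s) * (#s * b ^ 2) := by
        gcongr; simpa using sum_le_card_nsmul s _ _ hpoint
    _ = b ^ 2 := by field_simp [hs.card_pos.ne']

end Finset

theorem average_square_le_of_quadratic_form_le_general {d : ℕ}
    (T : Finset (EuclideanSpace ℝ (Fin d)))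
    (u : EuclideanSpace ℝ (Fin d)) (b r ρ B : ℝ)
    (hband : ∀ x ∈ T, |(inner ℝ u x : ℝ)| ≤ b)
    (hM : ∀ H : Matrix (Fin d) (Fin d) ℝ, H.PosSemidef → H.trace ≤ r ^ 2 →
      (∑ i, ∑ j, |H i j|) ≤ ρ ^ 2 →
      (1 / T.card) * ∑ x ∈ T, ∑ i, ∑ j, H i j * x i * x j ≤ B)
    (w : EuclideanSpace ℝ (Fin d)) (hw2 : ‖w - u‖ ≤ r) (hw1 : ∑ i, |(w - u) i| ≤ ρ) :
    (1 / T.card) * ∑ x ∈ T, (inner ℝ w x : ℝ) ^ 2 ≤ 2 * b ^ 2 + 2 * B := by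
  set v := w - u
  have hv : (1 / T.card) * ∑ x ∈ T, inner ℝ v x ^ 2 ≤ B := by
    have hvv := hM (vecMulVec v.ofLp v.ofLp) (posSemidef_vecMulVec_self _)
      (by rw [EuclideanSpace.trace_vecMulVec_self]; gcongr)
      (by rw [sum_sum_abs_vecMulVec_self]; gcongr)
    simpa only [sum_sum_vecMulVec_self_mul_mul, ← EuclideanSpace.real_inner_eq_dotProduct]
      using hvv
  have hw : w = u + v := (add_sub_cancel u w).symm
  calc (1 / T.card) * ∑ x ∈ T, inner ℝ w x ^ 2
      = (1 / T.card) * ∑ x ∈ T, (inner ℝ u x + inner ℝ v x) ^ 2 := by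
        simp only [hw, inner_add_left]
    _ ≤ 2 * b ^ 2 + 2 * B := by
      grw [average_sq_add_le, average_sq_le_of_abs_le hband, hv]

/-- If the average quadratic form over `T` is at most `B` for all PSD matrices
in the trace/entrywise-ℓ1 ball, then the average of `(w·x)²` is at most `2b² + 2B` for all
`w` in the ℓ2/ℓ1 ball around `u`. -/
theorem average_square_le_of_quadratic_form_le {d : ℕ}
    (T : Finset (EuclideanSpace ℝ (Fin d))) (hT : T.Nonempty)
    (u : EuclideanSpace ℝ (Fin d)) (b r ρ B : ℝ)
    (hb : 0 < b) (hr : 0 < r) (hρ : 0 < ρ) (hB : 0 ≤ B)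
    (hband : ∀ x ∈ T, |(inner ℝ u x : ℝ)| ≤ b)
    (hM : ∀ H : Matrix (Fin d) (Fin d) ℝ, H.PosSemidef → H.trace ≤ r ^ 2 →
      (∑ i, ∑ j, |H i j|) ≤ ρ ^ 2 →
      (1 / T.card) * ∑ x ∈ T, ∑ i, ∑ j, H i j * x i * x j ≤ B)
    (w : EuclideanSpace ℝ (Fin d)) (hw2 : ‖w - u‖ ≤ r) (hw1 : ∑ i, |(w - u) i| ≤ ρ) :
    (1 / T.card) * ∑ x ∈ T, (inner ℝ w x : ℝ) ^ 2 ≤ 2 * b ^ 2 + 2 * B :=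
  average_square_le_of_quadratic_form_le_general T u b r ρ B hband hM w hw2 hw1
end

section
/- Let u and v be vectors in a real inner product space with ‖u‖ = 1 and v ≠ 0. Then the angle θ(v, u) between v and u satisfies θ(v, u) ≤ π · ‖v − u‖. -/
/-!
Write `θ` for the angle between `v` and the unit vector `u`. Splitting `u` into its components
along and orthogonal to `v` gives `‖v - u‖² = (‖v‖ - cos θ)² + sin² θ`, so `‖v - u‖ ≥ sin θ`,
and `‖v - u‖ ≥ 1` once `cos θ ≤ 0`. For `θ ≤ π / 2` Jordan's inequality `2θ / π ≤ sin θ`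
finishes; for `θ ≥ π / 2` we have `θ ≤ π ≤ π ‖v - u‖`.
-/

open Real

namespace InnerProductGeometry

variable {E : Type*} [NormedAddCommGroup E] [InnerProductSpace ℝ E]

theorem norm_sub_sq_eq_sq_add_sq_sin_angle (v u : E) :
    ‖v - u‖ ^ 2 = (‖v‖ - ‖u‖ * cos (angle v u)) ^ 2 + (‖u‖ * sin (angle v u)) ^ 2 := by
  have hcos := norm_sub_sq_eq_norm_sq_add_norm_sq_sub_two_mul_norm_mul_norm_mul_cos_angle v u
  linear_combination hcos - ‖u‖ ^ 2 * sin_sq_add_cos_sq (angle v u)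

theorem norm_mul_sin_angle_le_norm_sub (v u : E) : ‖u‖ * sin (angle v u) ≤ ‖v - u‖ :=
  abs_le_of_sq_le_sq' (by rw [norm_sub_sq_eq_sq_add_sq_sin_angle]; nlinarith) (norm_nonneg _) |>.2

theorem norm_le_norm_sub_of_pi_div_two_le_angle {v u : E} (h : π / 2 ≤ angle v u) :
    ‖u‖ ≤ ‖v - u‖ := by
  have hcos : cos (angle v u) ≤ 0 :=
    cos_nonpos_of_pi_div_two_le_of_le h (by linarith [angle_le_pi v u, pi_pos])
  have hsq := norm_sub_sq_eq_norm_sq_add_norm_sq_sub_two_mul_norm_mul_norm_mul_cos_angle v u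
  have : ‖u‖ ^ 2 ≤ ‖v - u‖ ^ 2 := by
    nlinarith [mul_nonneg (norm_nonneg v) (norm_nonneg u)]
  exact (sq_le_sq₀ (norm_nonneg _) (norm_nonneg _)).1 this

end InnerProductGeometry

open InnerProductGeometry in
theorem angle_le_pi_mul_dist_general {E : Type*} [NormedAddCommGroup E] [InnerProductSpace ℝ E]
    (u v : E) (hu : ‖u‖ = 1) :
    InnerProductGeometry.angle v u ≤ Real.pi * ‖v - u‖ := by
  rcases le_total (angle v u) (π / 2) with hacute | hobtuse
  · have hsin := norm_mul_sin_angle_le_norm_sub v u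
    rw [hu, one_mul] at hsin
    calc angle v u = π / 2 * (2 / π * angle v u) := by field_simp
      _ ≤ π / 2 * ‖v - u‖ := by
        gcongr; exact (mul_le_sin (angle_nonneg v u) hacute).trans hsin
      _ ≤ π * ‖v - u‖ := by gcongr; linarith [pi_pos]
  · have hdist := norm_le_norm_sub_of_pi_div_two_le_angle hobtuse
    rw [hu] at hdist
    nlinarith [angle_le_pi v u, pi_pos]

/-- The angle between a nonzero vector `v` and a unit vector `u` is at most
`π` times their distance. -/
theorem angle_le_pi_mul_dist {E : Type*} [NormedAddCommGroup E] [InnerProductSpace ℝ E]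
    (u v : E) (hu : ‖u‖ = 1) (hv : v ≠ 0) :
    InnerProductGeometry.angle v u ≤ Real.pi * ‖v - u‖ :=
  angle_le_pi_mul_dist_general u v hu
end

section
/- Let s ≤ d be positive integers, let k ≥ 1 be an integer, let w* ∈ ℝ^d be an s-sparse unit vector, and let v ∈ ℝ^d be nonzero with angle θ(v, w*) ≤ 2^{−k−8}·π. Let v̂ = v/‖v‖₂, and let z ∈ ℝ^d be an s-sparse vector with ‖v̂ − z‖₂ ≤ ‖v̂ − w‖₂ for every s-sparse w ∈ ℝ^d. Then z ≠ 0, and the vector w' = z/‖z‖₂ satisfies ‖w' − w*‖₂ ≤ 2^{−k−4} and ‖w' − w*‖₁ ≤ √(2s)·2^{−k−4}. -/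
/-!
Chords are shorter than arcs, so the angle bound puts `v̂ = v / ‖v‖` within `2 ^ (-k - 6)` of
`w*`. Since `w*` is itself `s`-sparse, the best `s`-sparse approximation `z` is at least as close
to `v̂`, and renormalizing `z` costs at most `‖v̂ - z‖` again, because `z / ‖z‖` is the unit vector
nearest to `z`; this gives `‖w' - w*‖ ≤ 3 · 2 ^ (-k - 6)`. The `ℓ1` bound is Cauchy–Schwarz on the
support of `w' - w*`, which has at most `2 s` elements.
-/

open InnerProductGeometry Real

section Normalize

variable {E : Type*} [NormedAddCommGroup E] [NormedSpace ℝ E]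

theorem norm_inv_norm_smul_sub_self_le {x z : E} (hx : ‖x‖ = 1) (hz : z ≠ 0) :
    ‖‖z‖⁻¹ • z - z‖ ≤ ‖x - z‖ := by
  have hz' : ‖z‖ ≠ 0 := norm_ne_zero_iff.mpr hz
  calc ‖‖z‖⁻¹ • z - z‖ = ‖(‖z‖⁻¹ - 1) • z‖ := by rw [sub_smul, one_smul]
    _ = |‖z‖⁻¹ - 1| * |‖z‖| := by rw [norm_smul, Real.norm_eq_abs, abs_norm]
    _ = |1 - ‖z‖| := by rw [← abs_mul, sub_mul, inv_mul_cancel₀ hz', one_mul, abs_sub_comm]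
    _ = |‖x‖ - ‖z‖| := by rw [hx]
    _ ≤ ‖x - z‖ := abs_norm_sub_norm_le x z

theorem norm_inv_norm_smul_sub_le_three_mul {x z w : E} (hx : ‖x‖ = 1) (hz : z ≠ 0)
    (hxz : ‖x - z‖ ≤ ‖x - w‖) : ‖‖z‖⁻¹ • z - w‖ ≤ 3 * ‖x - w‖ := by
  calc ‖‖z‖⁻¹ • z - w‖ ≤ ‖‖z‖⁻¹ • z - z‖ + ‖x - z‖ + ‖x - w‖ := by
        have h₁ := norm_sub_le_norm_sub_add_norm_sub (‖z‖⁻¹ • z) z w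
        have h₂ := norm_sub_le_norm_sub_add_norm_sub z x w
        rw [norm_sub_rev z x] at h₂
        linarith
    _ ≤ 3 * ‖x - w‖ := by linarith [norm_inv_norm_smul_sub_self_le hx hz]

end Normalize

theorem norm_sub_le_angle_of_norm_eq_one {E : Type*} [NormedAddCommGroup E]
    [InnerProductSpace ℝ E] {x y : E} (hx : ‖x‖ = 1) (hy : ‖y‖ = 1) :
    ‖x - y‖ ≤ angle x y := by
  have hsq : ‖x - y‖ ^ 2 = 2 - 2 * Real.cos (angle x y) := by
    rw [sq, norm_sub_sq_eq_norm_sq_add_norm_sq_sub_two_mul_norm_mul_norm_mul_cos_angle, hx, hy]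
    ring
  have hcos := Real.one_sub_sq_div_two_le_cos (x := angle x y)
  exact (pow_le_pow_iff_left₀ (norm_nonneg _) (angle_nonneg x y) two_ne_zero).mp (by linarith)

section Sparse

variable {ι : Type*} [Fintype ι]

theorem ncard_setOf_sub_ne_zero_le (u v : EuclideanSpace ℝ ι) :
    {i | (u - v) i ≠ 0}.ncard ≤ {i | u i ≠ 0}.ncard + {i | v i ≠ 0}.ncard := by
  refine (Set.ncard_le_ncard ?_ (Set.toFinite _)).trans (Set.ncard_union_le _ _)
  intro i hi
  by_contra h
  simp_all

theorem ncard_setOf_smul_ne_zero_le (c : ℝ) (u : EuclideanSpace ℝ ι) :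
    {i | (c • u) i ≠ 0}.ncard ≤ {i | u i ≠ 0}.ncard :=
  Set.ncard_le_ncard (fun i hi => by simp_all) (Set.toFinite _)

theorem sum_abs_le_sqrt_ncard_mul_norm (u : EuclideanSpace ℝ ι) :
    ∑ i, |u i| ≤ √({i | u i ≠ 0}.ncard) * ‖u‖ := by
  classical
  set T := Finset.univ.filter fun i => u i ≠ 0
  have hT : {i | u i ≠ 0}.ncard = T.card := by
    rw [Set.ncard_eq_toFinset_card', Set.toFinset_ofPred]
  have hsum : ∑ i ∈ T, |u i| = ∑ i, |u i| :=
    Finset.sum_filter_of_ne fun i _ h => by simpa using h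
  have hsq : ∑ i ∈ T, |u i| ^ 2 ≤ ‖u‖ ^ 2 := by
    rw [EuclideanSpace.norm_sq_eq]
    exact Finset.sum_le_sum_of_subset_of_nonneg (Finset.subset_univ T)
      (fun i _ _ => by positivity) |>.trans_eq (by simp)
  rw [hT, ← hsum, ← Real.sqrt_sq (norm_nonneg u), ← Real.sqrt_mul (Nat.cast_nonneg _),
    Real.le_sqrt (Finset.sum_nonneg fun i _ => abs_nonneg _) (by positivity)]
  calc (∑ i ∈ T, |u i|) ^ 2 ≤ T.card * ∑ i ∈ T, |u i| ^ 2 := sq_sum_le_card_mul_sum_sq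
    _ ≤ T.card * ‖u‖ ^ 2 := by gcongr

end Sparse

theorem hard_threshold_normalize_close_general {d s : ℕ}
    (k : ℕ)
    (wstar : EuclideanSpace ℝ (Fin d))
    (hwsparse : {i | wstar i ≠ 0}.ncard ≤ s) (hwnorm : ‖wstar‖ = 1)
    (v : EuclideanSpace ℝ (Fin d)) (hv : v ≠ 0)
    (hangle : InnerProductGeometry.angle v wstar ≤ 2 ^ (-(k : ℝ) - 8) * Real.pi)
    (z : EuclideanSpace ℝ (Fin d)) (hzsparse : {i | z i ≠ 0}.ncard ≤ s)
    (hbest : ∀ w : EuclideanSpace ℝ (Fin d), {i | w i ≠ 0}.ncard ≤ s →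
      ‖‖v‖⁻¹ • v - z‖ ≤ ‖‖v‖⁻¹ • v - w‖) :
    z ≠ 0 ∧
      ‖‖z‖⁻¹ • z - wstar‖ ≤ 2 ^ (-(k : ℝ) - 4) ∧
      ∑ i, |(‖z‖⁻¹ • z - wstar) i| ≤ Real.sqrt (2 * s) * 2 ^ (-(k : ℝ) - 4) := by
  set ε : ℝ := 2 ^ (-(k : ℝ) - 4)
  have hε_pos : 0 < ε := by positivity
  have hε_le_one : ε ≤ 1 :=
    Real.rpow_le_one_of_one_le_of_nonpos one_le_two (by linarith [k.cast_nonneg (α := ℝ)])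
  have hx : ‖‖v‖⁻¹ • v‖ = 1 := norm_smul_inv_norm hv
  have hclose : ‖‖v‖⁻¹ • v - wstar‖ ≤ ε / 4 :=
    calc ‖‖v‖⁻¹ • v - wstar‖ ≤ angle (‖v‖⁻¹ • v) wstar :=
          norm_sub_le_angle_of_norm_eq_one hx hwnorm
      _ = angle v wstar := angle_smul_left_of_pos _ _ (inv_pos.mpr (norm_pos_iff.mpr hv))
      _ ≤ ε * (π / 16) := hangle.trans_eq <| by
          rw [show -(k : ℝ) - 8 = -(k : ℝ) - 4 + -4 by ring, Real.rpow_add two_pos]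
          norm_num; ring
      _ ≤ ε / 4 := by nlinarith [pi_le_four]
  have hbest_wstar := hbest wstar hwsparse
  have hz : z ≠ 0 := by
    rintro rfl
    rw [sub_zero, hx] at hbest_wstar
    linarith
  have hL2 : ‖‖z‖⁻¹ • z - wstar‖ ≤ ε :=
    (norm_inv_norm_smul_sub_le_three_mul hx hz hbest_wstar).trans (by linarith)
  refine ⟨hz, hL2, ?_⟩
  have hsupp : {i | (‖z‖⁻¹ • z - wstar) i ≠ 0}.ncard ≤ 2 * s :=
    calc _ ≤ {i | (‖z‖⁻¹ • z) i ≠ 0}.ncard + {i | wstar i ≠ 0}.ncard :=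
          ncard_setOf_sub_ne_zero_le _ _
      _ ≤ {i | z i ≠ 0}.ncard + {i | wstar i ≠ 0}.ncard :=
          Nat.add_le_add_right (ncard_setOf_smul_ne_zero_le _ _) _
      _ ≤ 2 * s := by omega
  calc _ ≤ √({i | (‖z‖⁻¹ • z - wstar) i ≠ 0}.ncard) * ‖‖z‖⁻¹ • z - wstar‖ :=
        sum_abs_le_sqrt_ncard_mul_norm _
    _ ≤ √(2 * s) * ε := by gcongr; exact_mod_cast hsupp

/-- Hard thresholding the normalization of `v` to its best s-sparse
approximation and renormalizing yields a vector close to the s-sparse unit target `w*`,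
both in ℓ2 and ℓ1 norm. -/
theorem hard_threshold_normalize_close {d s : ℕ} (hs : 1 ≤ s) (hsd : s ≤ d)
    (k : ℕ) (hk : 1 ≤ k)
    (wstar : EuclideanSpace ℝ (Fin d))
    (hwsparse : {i | wstar i ≠ 0}.ncard ≤ s) (hwnorm : ‖wstar‖ = 1)
    (v : EuclideanSpace ℝ (Fin d)) (hv : v ≠ 0)
    (hangle : InnerProductGeometry.angle v wstar ≤ 2 ^ (-(k : ℝ) - 8) * Real.pi)
    (z : EuclideanSpace ℝ (Fin d)) (hzsparse : {i | z i ≠ 0}.ncard ≤ s)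
    (hbest : ∀ w : EuclideanSpace ℝ (Fin d), {i | w i ≠ 0}.ncard ≤ s →
      ‖‖v‖⁻¹ • v - z‖ ≤ ‖‖v‖⁻¹ • v - w‖) :
    z ≠ 0 ∧
      ‖‖z‖⁻¹ • z - wstar‖ ≤ 2 ^ (-(k : ℝ) - 4) ∧
      ∑ i, |(‖z‖⁻¹ • z - wstar) i| ≤ Real.sqrt (2 * s) * 2 ^ (-(k : ℝ) - 4) :=
  hard_threshold_normalize_close_general k wstar hwsparse hwnorm v hv hangle z hzsparse hbest
end

section
/- Let d ≥ 1 and n ≥ 1 be integers, let u, x₁, …, xₙ ∈ ℝ^d, let z₁, …, zₙ ∈ ℝ, and let b, r, ρ, λ > 0. Suppose |u·xᵢ| ≤ b and |zᵢ| ≤ λ for all 1 ≤ i ≤ n. Let W = {w ∈ ℝ^d : ‖w − u‖₂ ≤ r and ‖w − u‖₁ ≤ ρ}. Then the average over all sign vectors σ ∈ {−1, 1}ⁿ (each with probability 2^{−n}) of sup_{w ∈ W} | ∑_{i=1}^n σᵢ zᵢ (w·xᵢ) | is at most λ b √n + ρ λ √(2 n log(2d)) · max_{1≤i≤n} ‖xᵢ‖_∞.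 -/
/-!
With `g σ = ∑ i, σᵢ zᵢ xᵢ` the objective is `|⟪w, g σ⟫|`, and writing `w = u + (w - u)` splits it
into `|⟪u, g σ⟫|` plus, by ℓ¹–ℓ∞ duality, at most `ρ ‖g σ‖_∞`. The first term is a Rademacher sum
with coefficients bounded by `λ b`, so by Cauchy–Schwarz and orthogonality of the signs its mean is
at most `λ b √n`. The second is a maximum of `d` absolute values of Rademacher sums, each
sub-Gaussian since `cosh s ≤ exp (s² / 2)`; Massart's argument (Jensen for `exp`, a union over the
`2 d` signed sums, optimisation over the exponential parameter) bounds its mean by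
`λ M √(2 n log (2 d))`, where `M` bounds the coordinates of the `xᵢ`.
-/

open Finset Real
open scoped BigOperators RealInnerProductSpace

def boolSign (b : Bool) : ℝ := if b then 1 else -1

lemma boolSign_mul_self (b : Bool) : boolSign b * boolSign b = 1 := by
  cases b <;> norm_num [boolSign]

lemma expect_exp_boolSign_mul (c : ℝ) : 𝔼 b, exp (boolSign b * c) = cosh c := by
  rw [Fintype.expect_eq_sum_div_card, Fintype.sum_bool, cosh_eq]
  norm_num [boolSign]

lemma sum_sq_le_card_mul_sq {ι : Type*} [Fintype ι] {a : ι → ℝ} {B : ℝ} (h : ∀ i, |a i| ≤ B) :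
    ∑ i, a i ^ 2 ≤ Fintype.card ι * B ^ 2 := by
  simpa using sum_le_card_nsmul univ (fun i => a i ^ 2) (B ^ 2) fun i _ =>
    sq_le_sq' (abs_le.1 (h i)).1 (abs_le.1 (h i)).2

lemma sqrt_sum_sq_le_mul_sqrt_card {ι : Type*} [Fintype ι] {a : ι → ℝ} {B : ℝ} (hB : 0 ≤ B)
    (h : ∀ i, |a i| ≤ B) : √(∑ i, a i ^ 2) ≤ B * √(Fintype.card ι) := by
  calc √(∑ i, a i ^ 2) ≤ √(B ^ 2 * Fintype.card ι) :=
        sqrt_le_sqrt ((sum_sq_le_card_mul_sq h).trans_eq (mul_comm _ _))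
    _ = B * √(Fintype.card ι) := by rw [sqrt_mul (sq_nonneg _), sqrt_sq hB]

section Rademacher

variable {ι : Type*} [Fintype ι] [DecidableEq ι]

lemma expect_boolSign_mul_boolSign (i j : ι) :
    𝔼 σ : ι → Bool, boolSign (σ i) * boolSign (σ j) = if i = j then 1 else 0 := by
  split_ifs with hij
  · simp [hij, boolSign_mul_self]
  · rw [Fintype.expect_eq_sum_div_card, div_eq_zero_iff]
    left
    refine sum_ninvolution (fun σ => Function.update σ i (!σ i)) (fun σ => ?_) (fun σ _ => ?_)
      (fun _ => mem_univ _) (fun σ => by simp)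
    · simp only [Function.update_self, Function.update_of_ne (Ne.symm hij)]
      cases σ i <;> cases σ j <;> norm_num [boolSign]
    · exact fun h => by simpa using congrFun h i

lemma expect_sq_rademacher_sum (a : ι → ℝ) :
    𝔼 σ : ι → Bool, (∑ i, boolSign (σ i) * a i) ^ 2 = ∑ i, a i ^ 2 := by
  calc 𝔼 σ : ι → Bool, (∑ i, boolSign (σ i) * a i) ^ 2
      = ∑ i, ∑ j, (𝔼 σ : ι → Bool, boolSign (σ i) * boolSign (σ j)) * (a i * a j) := by
        simp_rw [sq, sum_mul_sum, expect_sum_comm, expect_mul]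
        refine sum_congr rfl fun i _ => sum_congr rfl fun j _ => expect_congr rfl fun σ _ => ?_
        ring
    _ = ∑ i, a i ^ 2 := by simp [expect_boolSign_mul_boolSign, sq]

lemma expect_abs_rademacher_sum_le (a : ι → ℝ) :
    𝔼 σ : ι → Bool, |∑ i, boolSign (σ i) * a i| ≤ √(∑ i, a i ^ 2) := by
  have h := expect_mul_sq_le_sq_mul_sq univ (fun _ : ι → Bool => (1 : ℝ))
    (fun σ => |∑ i, boolSign (σ i) * a i|)
  simp only [one_mul, one_pow, sq_abs, expect_const univ_nonempty, expect_sq_rademacher_sum] at h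
  exact le_sqrt_of_sq_le h

lemma expect_prod_apply_eq_prod_expect {κ : Type*} [Fintype κ] (f : ι → κ → ℝ) :
    𝔼 σ : ι → κ, ∏ i, f i (σ i) = ∏ i, 𝔼 k, f i k := by
  simp only [Fintype.expect_eq_sum_div_card, ← Fintype.prod_sum, prod_div_distrib, prod_const,
    Fintype.card_fun, Nat.cast_pow, card_univ]

lemma expect_exp_rademacher_sum_le (c : ι → ℝ) :
    𝔼 σ : ι → Bool, exp (∑ i, boolSign (σ i) * c i) ≤ exp ((∑ i, c i ^ 2) / 2) := by
  calc 𝔼 σ : ι → Bool, exp (∑ i, boolSign (σ i) * c i)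
      = ∏ i, 𝔼 b, exp (boolSign b * c i) := by
        simp only [exp_sum]
        exact expect_prod_apply_eq_prod_expect fun i b => exp (boolSign b * c i)
    _ ≤ ∏ i, exp (c i ^ 2 / 2) := by
        simp only [expect_exp_boolSign_mul]
        exact prod_le_prod (fun i _ => (cosh_pos _).le) fun i _ => cosh_le_exp_half_sq _
    _ = exp ((∑ i, c i ^ 2) / 2) := by rw [← exp_sum, sum_div]

lemma expect_exp_mul_rademacher_sum_le (t : ℝ) (c : ι → ℝ) {S : ℝ} (hS : ∑ i, c i ^ 2 ≤ S) :
    𝔼 σ : ι → Bool, exp (t * ∑ i, boolSign (σ i) * c i) ≤ exp (t ^ 2 * S / 2) := by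
  calc 𝔼 σ : ι → Bool, exp (t * ∑ i, boolSign (σ i) * c i)
      = 𝔼 σ : ι → Bool, exp (∑ i, boolSign (σ i) * (t * c i)) := by
        simp only [mul_sum, mul_left_comm t]
    _ ≤ exp ((∑ i, (t * c i) ^ 2) / 2) := expect_exp_rademacher_sum_le _
    _ ≤ exp (t ^ 2 * S / 2) := by
        simp only [mul_pow, ← mul_sum]
        gcongr

lemma expect_abs_rademacher_sum_le_mul_sqrt_card {a : ι → ℝ} {B : ℝ} (hB : 0 ≤ B)
    (h : ∀ i, |a i| ≤ B) : 𝔼 σ : ι → Bool, |∑ i, boolSign (σ i) * a i| ≤ B * √(Fintype.card ι) :=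
  (expect_abs_rademacher_sum_le a).trans (sqrt_sum_sq_le_mul_sqrt_card hB h)

end Rademacher

lemma ConvexOn.map_expect_le {α : Type*} {s : Finset α} (hs : s.Nonempty) {t : Set ℝ}
    {f : ℝ → ℝ} (hf : ConvexOn ℝ t f) {g : α → ℝ} (hg : ∀ a ∈ s, g a ∈ t) :
    f (𝔼 a ∈ s, g a) ≤ 𝔼 a ∈ s, f (g a) := by
  have hw : ∑ _a ∈ s, ((#s : ℝ))⁻¹ = 1 := by
    rw [sum_const, nsmul_eq_mul, mul_inv_cancel₀ (by exact_mod_cast hs.card_ne_zero)]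
  simpa only [expect_eq_sum_div_card, div_eq_inv_mul, mul_sum, smul_eq_mul] using
    hf.map_sum_le (fun _ _ => by positivity) hw hg

lemma exp_mul_sup'_abs_le_sum {J : Type*} {s : Finset J} (hs : s.Nonempty) (t : ℝ)
    (y : J → ℝ) :
    exp (t * s.sup' hs fun j => |y j|) ≤ ∑ j ∈ s, (exp (t * y j) + exp (-t * y j)) := by
  obtain ⟨j, hj, hjmax⟩ := exists_mem_eq_sup' hs fun j => |y j|
  calc exp (t * s.sup' hs fun j => |y j|)
      ≤ exp (t * y j) + exp (-t * y j) := by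
        rw [hjmax]
        rcases abs_cases (y j) with ⟨hy, _⟩ | ⟨hy, _⟩ <;> rw [hy]
        · exact le_add_of_nonneg_right (exp_pos _).le
        · rw [mul_neg, ← neg_mul]; exact le_add_of_nonneg_left (exp_pos _).le
    _ ≤ ∑ j ∈ s, (exp (t * y j) + exp (-t * y j)) :=
        single_le_sum (f := fun j => exp (t * y j) + exp (-t * y j)) (fun _ _ => by positivity) hj

lemma le_sqrt_of_forall_pos_mul_le {X L S : ℝ} (hL : 0 < L)
    (h : ∀ t > 0, t * X ≤ L + t ^ 2 * S / 2) : X ≤ √(2 * S * L) := by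
  by_contra! hX
  have hX0 : 0 < X := (sqrt_nonneg _).trans_lt hX
  -- testing at `t = 2L / X` rather than the optimal `√(2L / S)` avoids dividing by `S`
  have ht := h (2 * L / X) (by positivity)
  rw [div_mul_cancel₀ _ hX0.ne', div_pow, mul_div_assoc, div_mul_eq_mul_div] at ht
  have hLX : L * X ^ 2 ≤ (2 * L) ^ 2 * (S / 2) := (le_div_iff₀ (by positivity)).1 (by linarith)
  have key : X ^ 2 ≤ 2 * S * L := by nlinarith
  exact hX.not_ge ((le_sqrt hX0.le (by nlinarith)).2 key)

theorem expect_sup'_abs_rademacher_sum_le {ι J : Type*} [Fintype ι] [DecidableEq ι] [Fintype J]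
    [Nonempty J] (c : J → ι → ℝ) {S : ℝ} (hS : ∀ j, ∑ i, c j i ^ 2 ≤ S) :
    𝔼 σ : ι → Bool, univ.sup' univ_nonempty (fun j => |∑ i, boolSign (σ i) * c j i|)
      ≤ √(2 * S * log (2 * Fintype.card J)) := by
  have hcard : (1 : ℝ) ≤ Fintype.card J := by exact_mod_cast Fintype.card_pos
  refine le_sqrt_of_forall_pos_mul_le (log_pos (by linarith)) fun t ht => ?_
  rw [← exp_le_exp, exp_add, exp_log (by positivity), mul_expect]
  calc exp (𝔼 σ : ι → Bool, t * univ.sup' univ_nonempty fun j => |∑ i, boolSign (σ i) * c j i|)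
      ≤ 𝔼 σ : ι → Bool, exp (t * univ.sup' univ_nonempty fun j => |∑ i, boolSign (σ i) * c j i|) :=
        convexOn_exp.map_expect_le univ_nonempty fun _ _ => Set.mem_univ _
    _ ≤ 𝔼 σ : ι → Bool, ∑ j, (exp (t * ∑ i, boolSign (σ i) * c j i)
          + exp (-t * ∑ i, boolSign (σ i) * c j i)) :=
        expect_le_expect fun σ _ => exp_mul_sup'_abs_le_sum _ t _
    _ = ∑ j, (𝔼 σ : ι → Bool, exp (t * ∑ i, boolSign (σ i) * c j i)
          + 𝔼 σ : ι → Bool, exp (-t * ∑ i, boolSign (σ i) * c j i)) := by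
        simp only [expect_sum_comm, expect_add_distrib]
    _ ≤ ∑ _j : J, (exp (t ^ 2 * S / 2) + exp (t ^ 2 * S / 2)) := by
        refine sum_le_sum fun j _ => add_le_add ?_ ?_
        · exact expect_exp_mul_rademacher_sum_le t (c j) (hS j)
        · simpa only [neg_sq] using expect_exp_mul_rademacher_sum_le (-t) (c j) (hS j)
    _ = 2 * Fintype.card J * exp (t ^ 2 * S / 2) := by
        rw [sum_const, card_univ, nsmul_eq_mul]
        ring

theorem expect_sup'_abs_rademacher_sum_le_mul_sqrt {ι J : Type*} [Fintype ι] [DecidableEq ι]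
    [Fintype J] [Nonempty J] {c : J → ι → ℝ} {B : ℝ} (hB : 0 ≤ B) (h : ∀ j i, |c j i| ≤ B) :
    𝔼 σ : ι → Bool, univ.sup' univ_nonempty (fun j => |∑ i, boolSign (σ i) * c j i|)
      ≤ B * √(2 * Fintype.card ι * log (2 * Fintype.card J)) := by
  refine (expect_sup'_abs_rademacher_sum_le c fun j => sum_sq_le_card_mul_sq (h j)).trans_eq ?_
  rw [show 2 * (Fintype.card ι * B ^ 2) * log (2 * Fintype.card J)
      = B ^ 2 * (2 * Fintype.card ι * log (2 * Fintype.card J)) by ring,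
    sqrt_mul (sq_nonneg _), sqrt_sq hB]

section Localization

variable {J : Type*} [Fintype J] [Nonempty J]

lemma abs_inner_le_sum_abs_mul_sup'_abs (a g : EuclideanSpace ℝ J) :
    |⟪a, g⟫| ≤ (∑ j, |a j|) * univ.sup' univ_nonempty fun j => |g j| := by
  simp only [PiLp.inner_apply, RCLike.inner_apply, conj_trivial, sum_mul]
  refine (abs_sum_le_sum_abs _ _).trans (sum_le_sum fun j _ => ?_)
  rw [abs_mul, mul_comm]
  exact mul_le_mul_of_nonneg_left (le_sup' (fun j => |g j|) (mem_univ j)) (abs_nonneg _)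

lemma iSup_abs_inner_le {u : EuclideanSpace ℝ J} {ρ : ℝ} (hρ : 0 ≤ ρ)
    (W : Set (EuclideanSpace ℝ J)) (hW : ∀ w ∈ W, ∑ j, |(w - u) j| ≤ ρ) (g : EuclideanSpace ℝ J) :
    ⨆ w : W, |⟪(w : EuclideanSpace ℝ J), g⟫|
      ≤ |⟪u, g⟫| + ρ * univ.sup' univ_nonempty fun j => |g j| := by
  have hg : 0 ≤ univ.sup' univ_nonempty fun j => |g j| :=
    le_sup'_of_le _ (mem_univ (Classical.arbitrary J)) (abs_nonneg _)
  refine Real.iSup_le (fun ⟨w, hw⟩ => ?_) (by positivity)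
  calc |⟪w, g⟫| = |⟪u, g⟫ + ⟪w - u, g⟫| := by rw [inner_sub_left, add_sub_cancel]
    _ ≤ |⟪u, g⟫| + (∑ j, |(w - u) j|) * univ.sup' univ_nonempty fun j => |g j| :=
        (abs_add_le _ _).trans (by gcongr; exact abs_inner_le_sum_abs_mul_sup'_abs _ _)
    _ ≤ |⟪u, g⟫| + ρ * univ.sup' univ_nonempty fun j => |g j| := by gcongr; exact hW w hw

lemma iSup_abs_rademacher_sum_inner_le {ι : Type*} [Fintype ι] {u : EuclideanSpace ℝ J} {ρ : ℝ}
    (hρ : 0 ≤ ρ) (W : Set (EuclideanSpace ℝ J)) (hW : ∀ w ∈ W, ∑ j, |(w - u) j| ≤ ρ)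
    (σ : ι → Bool) (z : ι → ℝ) (x : ι → EuclideanSpace ℝ J) :
    ⨆ w : W, |∑ i, boolSign (σ i) * z i * ⟪(w : EuclideanSpace ℝ J), x i⟫|
      ≤ |∑ i, boolSign (σ i) * (z i * ⟪u, x i⟫)|
        + ρ * univ.sup' univ_nonempty fun j => |∑ i, boolSign (σ i) * (z i * x i j)| := by
  have h := iSup_abs_inner_le hρ W hW (∑ i, (boolSign (σ i) * z i) • x i)
  simp only [inner_sum, inner_smul_right, WithLp.ofLp_sum, Finset.sum_apply, PiLp.smul_apply,
    smul_eq_mul, mul_assoc] at h ⊢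
  exact h

end Localization

theorem rademacher_localized_class_general {d n : ℕ} (hd : 1 ≤ d) (hn : 1 ≤ n)
    (u : EuclideanSpace ℝ (Fin d)) (x : Fin n → EuclideanSpace ℝ (Fin d))
    (z : Fin n → ℝ) (b r ρ lam : ℝ)
    (hb : 0 < b) (hρ : 0 < ρ) (hlam : 0 < lam)
    (hband : ∀ i, |(inner ℝ u (x i) : ℝ)| ≤ b)
    (hz : ∀ i, |z i| ≤ lam) :
    (∑ σ : Fin n → Bool,
        ⨆ w : {w : EuclideanSpace ℝ (Fin d) // ‖w - u‖ ≤ r ∧ ∑ j, |(w - u) j| ≤ ρ},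
          |∑ i, (if σ i then (1 : ℝ) else -1) * z i * (inner ℝ w.1 (x i) : ℝ)|) / 2 ^ n
      ≤ lam * b * Real.sqrt n + ρ * lam * Real.sqrt (2 * n * Real.log (2 * d)) *
        Finset.univ.sup' ⟨⟨0, hn⟩, Finset.mem_univ _⟩
          (fun i => Finset.univ.sup' ⟨⟨0, hd⟩, Finset.mem_univ _⟩ (fun j => |x i j|)) := by
  have : Nonempty (Fin d) := ⟨⟨0, hd⟩⟩
  set M := Finset.univ.sup' ⟨⟨0, hn⟩, Finset.mem_univ _⟩
    (fun i => Finset.univ.sup' ⟨⟨0, hd⟩, Finset.mem_univ _⟩ (fun j => |x i j|))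
  have hxM : ∀ i j, |x i j| ≤ M := fun i j =>
    le_sup'_of_le _ (mem_univ i) (le_sup' (fun j => |x i j|) (mem_univ j))
  have hM : 0 ≤ M := (abs_nonneg _).trans (hxM ⟨0, hn⟩ ⟨0, hd⟩)
  rw [show (2 : ℝ) ^ n = Fintype.card (Fin n → Bool) by simp, ← Fintype.expect_eq_sum_div_card]
  calc _ ≤ 𝔼 σ : Fin n → Bool, (|∑ i, boolSign (σ i) * (z i * ⟪u, x i⟫)|
          + ρ * univ.sup' univ_nonempty fun j => |∑ i, boolSign (σ i) * (z i * x i j)|) :=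
        expect_le_expect fun σ _ => iSup_abs_rademacher_sum_inner_le hρ.le
          {w | ‖w - u‖ ≤ r ∧ ∑ j, |(w - u) j| ≤ ρ} (fun _ hw => hw.2) σ z x
    _ = 𝔼 σ : Fin n → Bool, |∑ i, boolSign (σ i) * (z i * ⟪u, x i⟫)|
          + ρ * 𝔼 σ : Fin n → Bool,
            univ.sup' univ_nonempty fun j => |∑ i, boolSign (σ i) * (z i * x i j)| := by
        rw [expect_add_distrib, mul_expect]
    _ ≤ lam * b * √n + ρ * (lam * M * √(2 * n * log (2 * d))) := by
        gcongr
        · simpa using expect_abs_rademacher_sum_le_mul_sqrt_card (by positivity) fun i =>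
            (abs_mul _ _).trans_le (mul_le_mul (hz i) (hband i) (abs_nonneg _) hlam.le)
        · simpa using expect_sup'_abs_rademacher_sum_le_mul_sqrt (by positivity) fun j i =>
            (abs_mul _ _).trans_le (mul_le_mul (hz i) (hxM i j) (abs_nonneg _) hlam.le)
    _ = _ := by ring

/-- Rademacher complexity bound for the localized class
`W = {w : ‖w−u‖₂ ≤ r, ‖w−u‖₁ ≤ ρ}` with bounded multipliers `zᵢ` and band condition
`|u·xᵢ| ≤ b`. -/
theorem rademacher_localized_class {d n : ℕ} (hd : 1 ≤ d) (hn : 1 ≤ n)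
    (u : EuclideanSpace ℝ (Fin d)) (x : Fin n → EuclideanSpace ℝ (Fin d))
    (z : Fin n → ℝ) (b r ρ lam : ℝ)
    (hb : 0 < b) (hr : 0 < r) (hρ : 0 < ρ) (hlam : 0 < lam)
    (hband : ∀ i, |(inner ℝ u (x i) : ℝ)| ≤ b)
    (hz : ∀ i, |z i| ≤ lam) :
    (∑ σ : Fin n → Bool,
        ⨆ w : {w : EuclideanSpace ℝ (Fin d) // ‖w - u‖ ≤ r ∧ ∑ j, |(w - u) j| ≤ ρ},
          |∑ i, (if σ i then (1 : ℝ) else -1) * z i * (inner ℝ w.1 (x i) : ℝ)|) / 2 ^ n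
      ≤ lam * b * Real.sqrt n + ρ * lam * Real.sqrt (2 * n * Real.log (2 * d)) *
        Finset.univ.sup' ⟨⟨0, hn⟩, Finset.mem_univ _⟩
          (fun i => Finset.univ.sup' ⟨⟨0, hd⟩, Finset.mem_univ _⟩ (fun j => |x i j|)) :=
  rademacher_localized_class_general hd hn u x z b r ρ lam hb hρ hlam hband hz
end

section
/- Let d ≥ 1 and n ≥ 1 be integers, let x₁, …, xₙ ∈ ℝ^d, and let ρ > 0. Then the average over all sign vectors σ ∈ {−1, 1}ⁿ (each with probability 2^{−n}) of sup{ | ∑_{i=1}^n σᵢ · xᵢᵀ H xᵢ | : H ∈ ℝ^{d×d}, ∑_{j,l} |H_{jl}| ≤ ρ² } is at most ρ² · √(2 n log(2 d²)) · max_{1≤i≤n} ‖xᵢ‖_∞². -/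
open Finset Real

/-! For each sign vector, ℓ¹–ℓ^∞ duality bounds the supremum over `H` by `ρ²` times the largest
of the `d²` Rademacher sums `∑ σᵢ xᵢⱼ xᵢₗ`, whose coefficients are at most `B²` in absolute value,
`B = maxᵢ ‖xᵢ‖_∞`. Massart's finite-class lemma bounds the average of such a maximum: by Jensen,
`exp (t · E max) ≤ E exp (t · max) ≤ ∑ₖ E 2 cosh (t Sₖ)`, the moment generating function of a
Rademacher sum factors into `∏ cosh ≤ exp (t² ∑ aᵢ² / 2)`, and optimizing in `t` gives
`√(2 R log (2N))`. -/

def rademacherSign (b : Bool) : ℝ := if b then 1 else -1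

theorem two_mul_cosh (x : ℝ) : 2 * cosh x = exp x + exp (-x) := by
  rw [cosh_eq]; ring

section Rademacher

variable {ι : Type*} [Fintype ι] [DecidableEq ι]

theorem sum_exp_rademacher_eq_prod_cosh (b : ι → ℝ) :
    ∑ σ : ι → Bool, exp (∑ i, rademacherSign (σ i) * b i) = ∏ i, 2 * cosh (b i) := by
  have h : ∀ i, 2 * cosh (b i) = ∑ β : Bool, exp (rademacherSign β * b i) := fun i => by
    simp [rademacherSign, two_mul_cosh]
  simp_rw [h, Fintype.prod_sum, exp_sum]

theorem sum_exp_rademacher_le (b : ι → ℝ) :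
    ∑ σ : ι → Bool, exp (∑ i, rademacherSign (σ i) * b i)
      ≤ 2 ^ Fintype.card ι * exp ((∑ i, b i ^ 2) / 2) :=
  calc ∑ σ : ι → Bool, exp (∑ i, rademacherSign (σ i) * b i)
      = ∏ i, 2 * cosh (b i) := sum_exp_rademacher_eq_prod_cosh b
    _ ≤ ∏ i, 2 * exp (b i ^ 2 / 2) :=
      prod_le_prod (fun i _ => by positivity) fun i _ => by gcongr; exact cosh_le_exp_half_sq _
    _ = 2 ^ Fintype.card ι * exp ((∑ i, b i ^ 2) / 2) := by
      rw [prod_mul_distrib, prod_const, card_univ, sum_div, exp_sum]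

theorem sum_two_mul_cosh_rademacher_le (b : ι → ℝ) :
    ∑ σ : ι → Bool, 2 * cosh (∑ i, rademacherSign (σ i) * b i)
      ≤ 2 * (2 ^ Fintype.card ι * exp ((∑ i, b i ^ 2) / 2)) := by
  have hneg := sum_exp_rademacher_le (-b)
  simp only [Pi.neg_apply, neg_sq, mul_neg, sum_neg_distrib] at hneg
  simp_rw [two_mul_cosh, sum_add_distrib]
  linarith [sum_exp_rademacher_le b]

end Rademacher

theorem exp_mul_sup'_abs_le_sum_two_mul_cosh {κ : Type*} (s : Finset κ) (hs : s.Nonempty)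
    (f : κ → ℝ) {t : ℝ} (ht : 0 ≤ t) :
    exp (t * s.sup' hs fun k => |f k|) ≤ ∑ k ∈ s, 2 * cosh (t * f k) := by
  obtain ⟨k, hk, hmax⟩ := exists_mem_eq_sup' hs fun k => |f k|
  calc exp (t * s.sup' hs fun k => |f k|) ≤ 2 * cosh (t * f k) := by
        rw [hmax, ← cosh_abs, abs_mul, abs_of_nonneg ht, two_mul_cosh]
        linarith [exp_pos (-(t * |f k|))]
    _ ≤ ∑ k ∈ s, 2 * cosh (t * f k) :=
        single_le_sum (f := fun k => 2 * cosh (t * f k)) (fun k _ => by positivity) hk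

theorem exp_sum_div_card_le {α : Type*} [Fintype α] [Nonempty α] (f : α → ℝ) :
    exp ((∑ a, f a) / Fintype.card α) ≤ (∑ a, exp (f a)) / Fintype.card α := by
  have hcard : (0 : ℝ) < Fintype.card α := by exact_mod_cast Fintype.card_pos
  have h := convexOn_exp.map_sum_le (t := univ) (w := fun _ => (Fintype.card α : ℝ)⁻¹) (p := f)
    (fun _ _ => by positivity) (by simp [hcard.ne']) (fun _ _ => Set.mem_univ _)
  simpa only [smul_eq_mul, inv_mul_eq_div, sum_div] using h

theorem le_sqrt_of_forall_mul_le {E L R : ℝ} (hL : 0 < L) (hR : 0 ≤ R)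
    (h : ∀ t > 0, t * E ≤ L + t ^ 2 * R / 2) : E ≤ √(2 * L * R) := by
  rcases hR.eq_or_lt with rfl | hR
  · by_contra! hE
    rw [mul_zero, sqrt_zero] at hE
    have := h (2 * L / E) (by positivity)
    rw [div_mul_cancel₀ _ hE.ne'] at this
    linarith
  · set s := √(2 * L * R)
    have hs : 0 < s := by positivity
    have hs2 : s ^ 2 = 2 * L * R := sq_sqrt (by positivity)
    have := h (s / R) (by positivity)
    have hrhs : L + (s / R) ^ 2 * R / 2 = s / R * s := by
      field_simp
      linear_combination -hs2
    exact le_of_mul_le_mul_left (this.trans hrhs.le) (by positivity)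

/-- Massart's lemma. -/
theorem sum_sup'_abs_rademacher_div_le {ι κ : Type*} [Fintype ι] [DecidableEq ι] [Fintype κ]
    [Nonempty κ] (a : κ → ι → ℝ) {R : ℝ} (hR : ∀ k, ∑ i, a k i ^ 2 ≤ R) :
    (∑ σ : ι → Bool, univ.sup' univ_nonempty fun k => |∑ i, rademacherSign (σ i) * a k i|)
        / 2 ^ Fintype.card ι
      ≤ √(2 * log (2 * Fintype.card κ) * R) := by
  set M : (ι → Bool) → ℝ := fun σ => univ.sup' univ_nonempty fun k =>
    |∑ i, rademacherSign (σ i) * a k i|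
  have hN : (1 : ℝ) ≤ Fintype.card κ := by exact_mod_cast Fintype.card_pos
  have hR0 : 0 ≤ R := (sum_nonneg fun i _ => sq_nonneg _).trans (hR (Classical.arbitrary κ))
  refine le_sqrt_of_forall_mul_le (log_pos (by linarith)) hR0 fun t ht => ?_
  have hmgf : exp (t * ((∑ σ, M σ) / 2 ^ Fintype.card ι))
      ≤ exp (log (2 * Fintype.card κ) + t ^ 2 * R / 2) := calc
    _ = exp ((∑ σ, t * M σ) / Fintype.card (ι → Bool)) := by
      rw [← mul_sum, Fintype.card_fun, Fintype.card_bool, Nat.cast_pow, Nat.cast_ofNat,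
        mul_div_assoc]
    _ ≤ (∑ σ, exp (t * M σ)) / 2 ^ Fintype.card ι := by
      simpa using exp_sum_div_card_le fun σ => t * M σ
    _ ≤ (∑ σ : ι → Bool, ∑ k, 2 * cosh (∑ i, rademacherSign (σ i) * (t * a k i)))
          / 2 ^ Fintype.card ι := by
      gcongr with σ
      refine (exp_mul_sup'_abs_le_sum_two_mul_cosh univ univ_nonempty _ ht.le).trans_eq ?_
      simp only [mul_sum, mul_left_comm t]
    _ ≤ (∑ k : κ, 2 * (2 ^ Fintype.card ι * exp ((∑ i, (t * a k i) ^ 2) / 2)))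
          / 2 ^ Fintype.card ι := by
      rw [sum_comm]
      gcongr with k
      exact sum_two_mul_cosh_rademacher_le _
    _ ≤ (∑ k : κ, 2 * (2 ^ Fintype.card ι * exp (t ^ 2 * R / 2))) / 2 ^ Fintype.card ι := by
      gcongr with k
      simp only [mul_pow, ← mul_sum]
      gcongr
      exact hR k
    _ = exp (log (2 * Fintype.card κ) + t ^ 2 * R / 2) := by
      rw [exp_add, exp_log (by positivity), sum_const, card_univ, nsmul_eq_mul]
      field_simp
  exact exp_le_exp.1 hmgf

theorem abs_sum_mul_le_sum_abs_mul_sup' {κ : Type*} (s : Finset κ) (hs : s.Nonempty)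
    (h g : κ → ℝ) : |∑ k ∈ s, h k * g k| ≤ (∑ k ∈ s, |h k|) * s.sup' hs fun k => |g k| :=
  calc |∑ k ∈ s, h k * g k| ≤ ∑ k ∈ s, |h k| * |g k| := by
        simpa only [abs_mul] using abs_sum_le_sum_abs (fun k => h k * g k) s
    _ ≤ ∑ k ∈ s, |h k| * s.sup' hs fun k => |g k| :=
        sum_le_sum fun k hk => by gcongr; exact le_sup' (fun k => |g k|) hk
    _ = (∑ k ∈ s, |h k|) * s.sup' hs fun k => |g k| := (sum_mul ..).symm

theorem iSup_abs_sum_quadratic_form_le {ι α : Type*} [Fintype ι] [Fintype α] [Nonempty α]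
    (s : ι → ℝ) (x : ι → α → ℝ) {r : ℝ} (hr : 0 ≤ r) :
    ⨆ H : {H : Matrix α α ℝ // ∑ j, ∑ l, |H j l| ≤ r},
        |∑ i, s i * ∑ j, ∑ l, H.1 j l * x i j * x i l|
      ≤ r * univ.sup' univ_nonempty fun p : α × α => |∑ i, s i * (x i p.1 * x i p.2)| := by
  set M := univ.sup' univ_nonempty fun p : α × α => |∑ i, s i * (x i p.1 * x i p.2)|
  have hM : 0 ≤ M := le_sup'_of_le _ (mem_univ (Classical.arbitrary _)) (abs_nonneg _)
  refine Real.iSup_le (fun H => ?_) (mul_nonneg hr hM)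
  have hswap : ∑ i, s i * ∑ j, ∑ l, H.1 j l * x i j * x i l
      = ∑ p : α × α, H.1 p.1 p.2 * ∑ i, s i * (x i p.1 * x i p.2) := by
    simp only [Fintype.sum_prod_type, mul_sum]
    rw [sum_comm]
    refine sum_congr rfl fun j _ => ?_
    rw [sum_comm]
    exact sum_congr rfl fun l _ => sum_congr rfl fun i _ => by ring
  rw [hswap]
  refine (abs_sum_mul_le_sum_abs_mul_sup' univ univ_nonempty
    (fun p : α × α => H.1 p.1 p.2) _).trans ?_
  rw [Fintype.sum_prod_type]
  exact mul_le_mul_of_nonneg_right H.2 hM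

theorem rademacher_quadratic_forms_general {d n : ℕ} (hd : 1 ≤ d) (hn : 1 ≤ n)
    (x : Fin n → EuclideanSpace ℝ (Fin d)) (ρ : ℝ) :
    (∑ σ : Fin n → Bool,
        ⨆ H : {H : Matrix (Fin d) (Fin d) ℝ // ∑ j, ∑ l, |H j l| ≤ ρ ^ 2},
          |∑ i, (if σ i then (1 : ℝ) else -1) * ∑ j, ∑ l, H.1 j l * x i j * x i l|) / 2 ^ n
      ≤ ρ ^ 2 * Real.sqrt (2 * n * Real.log (2 * (d : ℝ) ^ 2)) *
        (Finset.univ.sup' ⟨⟨0, hn⟩, Finset.mem_univ _⟩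
          (fun i => Finset.univ.sup' ⟨⟨0, hd⟩, Finset.mem_univ _⟩ (fun j => |x i j|))) ^ 2 := by
  set B := univ.sup' ⟨⟨0, hn⟩, mem_univ _⟩
    fun i => univ.sup' ⟨⟨0, hd⟩, mem_univ _⟩ fun j => |x i j|
  have hB : ∀ i j, |x i j| ≤ B := fun i j =>
    (le_sup' (fun j => |x i j|) (mem_univ j)).trans
      (le_sup' (fun i => univ.sup' _ fun j => |x i j|) (mem_univ i))
  have hB0 : 0 ≤ B := (abs_nonneg _).trans (hB ⟨0, hn⟩ ⟨0, hd⟩)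
  have : Nonempty (Fin d) := ⟨⟨0, hd⟩⟩
  set a : Fin d × Fin d → Fin n → ℝ := fun p i => x i p.1 * x i p.2
  have ha : ∀ p, ∑ i, a p i ^ 2 ≤ n * B ^ 4 := fun p => calc
    _ ≤ ∑ _i : Fin n, (B * B) ^ 2 := sum_le_sum fun i _ => by
      rw [← sq_abs, abs_mul]
      gcongr <;> apply hB
    _ = n * B ^ 4 := by rw [sum_const, card_univ, Fintype.card_fin, nsmul_eq_mul]; ring
  have hmassart := sum_sup'_abs_rademacher_div_le a ha
  calc _ ≤ (∑ σ : Fin n → Bool, ρ ^ 2 * univ.sup' univ_nonempty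
        fun p => |∑ i, rademacherSign (σ i) * a p i|) / 2 ^ n := by
        gcongr with σ
        exact iSup_abs_sum_quadratic_form_le _ (fun i j => x i j) (sq_nonneg ρ)
    _ ≤ ρ ^ 2 * √(2 * log (2 * Fintype.card (Fin d × Fin d)) * (n * B ^ 4)) := by
      rw [← mul_sum, mul_div_assoc]
      gcongr
      simpa using hmassart
    _ = _ := by
      rw [show 2 * log (2 * Fintype.card (Fin d × Fin d)) * (n * B ^ 4)
          = 2 * n * log (2 * (d : ℝ) ^ 2) * (B ^ 2) ^ 2 by simp [sq]; ring,
        sqrt_mul' _ (by positivity), sqrt_sq (by positivity)]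
      ring

/-- Rademacher complexity bound for quadratic forms of matrices with
entrywise ℓ1-norm at most ρ². -/
theorem rademacher_quadratic_forms {d n : ℕ} (hd : 1 ≤ d) (hn : 1 ≤ n)
    (x : Fin n → EuclideanSpace ℝ (Fin d)) (ρ : ℝ) (hρ : 0 < ρ) :
    (∑ σ : Fin n → Bool,
        ⨆ H : {H : Matrix (Fin d) (Fin d) ℝ // ∑ j, ∑ l, |H j l| ≤ ρ ^ 2},
          |∑ i, (if σ i then (1 : ℝ) else -1) * ∑ j, ∑ l, H.1 j l * x i j * x i l|) / 2 ^ n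
      ≤ ρ ^ 2 * Real.sqrt (2 * n * Real.log (2 * (d : ℝ) ^ 2)) *
        (Finset.univ.sup' ⟨⟨0, hn⟩, Finset.mem_univ _⟩
          (fun i => Finset.univ.sup' ⟨⟨0, hd⟩, Finset.mem_univ _⟩ (fun j => |x i j|))) ^ 2 :=
  rademacher_quadratic_forms_general hd hn x ρ
end
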